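/- Let k > 0, h ∈ ℝ, and let u ∈ C⁴([0,1]) be not identically zero, satisfying the linear equation u''''(x) − h·u''(x) + k·u(x) = 0 for all x ∈ [0,1] together with the hinged boundary conditions u(0) = u(1) = u''(0) = u''(1) = 0. Then h ≤ −2√k, the set S = {n integer, n ≥ 1 : n⁴π⁴ + h·n²π² + k = 0} is nonempty (and has at most two elements), and there exist reals a_n (n ∈ S) such that u(x) = Σ_{n∈S} a_n·sin(nπx) for all x ∈ [0,1]. -/

import Mathlib

/-!
With `s = √k`, the hinged conditions make `G = u'' u' - u''' u + (h + 2s) u' u` vanish at both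
ends, while the equation gives `G' = (u'' + s u)² + (h + 2s) u'²`. Integrating over `[0, 1]`
forces `h + 2s ≤ 0`, since `u(0) = 0` and `u ≢ 0` give `u' ≢ 0`.

Hence `h = -(ω₁² + ω₂²)` and `k = ω₁² ω₂²` with `ω₁, ω₂ > 0`, and the operator factors as
`(∂² + ω₁²)(∂² + ω₂²)`. So `v = u'' + ω₂² u` solves `v'' + ω₁² v = 0` with `v(0) = v(1) = 0`,
i.e. `v = c sin(ω₁ x)` with `c sin ω₁ = 0`; solving `u'' + ω₂² u = v` with `u(0) = u(1) = 0`
gives `u = A sin(ω₁ x) + B sin(ω₂ x)` with `A sin ω₁ = B sin ω₂ = 0` (when `ω₁ = ω₂`, the secular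
term `x cos(ω₁ x)` is excluded by `u(1) = 0`). A nonzero term forces `ω = nπ`, and `n ∈ S`
exactly when `nπ ∈ {ω₁, ω₂}`. Uniqueness for `v'' + ω² v = f` comes from the conserved energy
`(v₁' - v₂')² + ω² (v₁ - v₂)²` of the difference of two solutions.
-/

open Real Set

theorem ContDiffOn.hasDerivWithinAt_iteratedDerivWithin {𝕜 F : Type*} [NontriviallyNormedField 𝕜]
    [NormedAddCommGroup F] [NormedSpace 𝕜 F] {f : 𝕜 → F} {s : Set 𝕜} {n i : ℕ}
    (hf : ContDiffOn 𝕜 n f s) (hs : UniqueDiffOn 𝕜 s) (hi : i < n) {x : 𝕜} (hx : x ∈ s) :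
    HasDerivWithinAt (iteratedDerivWithin i f s) (iteratedDerivWithin (i + 1) f s x) s x := by
  rw [iteratedDerivWithin_succ]
  exact (hf.differentiableOn_iteratedDerivWithin (mod_cast hi) hs x hx).hasDerivWithinAt

def SolvesOscillatorOn (ω : ℝ) (f : ℝ → ℝ) (s : Set ℝ) (v v' : ℝ → ℝ) : Prop :=
  ∀ x ∈ s, HasDerivWithinAt v (v' x) s x ∧ HasDerivWithinAt v' (f x - ω ^ 2 * v x) s x

theorem solvesOscillatorOn_mul_sin (ω A α : ℝ) (s : Set ℝ) :
    SolvesOscillatorOn ω (fun x => A * (ω ^ 2 - α ^ 2) * sin (α * x)) s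
      (fun x => A * sin (α * x)) (fun x => A * α * cos (α * x)) := by
  intro x _
  have hα : HasDerivAt (fun x => α * x) α x := by simpa using (hasDerivAt_id x).const_mul α
  constructor
  · exact (hα.sin.const_mul A).hasDerivWithinAt.congr_deriv (by ring)
  · exact (hα.cos.const_mul (A * α)).hasDerivWithinAt.congr_deriv (by ring)

theorem solvesOscillatorOn_mul_id_mul_cos (ω A : ℝ) (s : Set ℝ) :
    SolvesOscillatorOn ω (fun x => -(2 * A * ω) * sin (ω * x)) s
      (fun x => A * x * cos (ω * x)) (fun x => A * (cos (ω * x) - ω * x * sin (ω * x))) := by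
  intro x _
  have hω : HasDerivAt (fun x => ω * x) ω x := by simpa using (hasDerivAt_id x).const_mul ω
  have hx : HasDerivAt (fun x => x) 1 x := hasDerivAt_id x
  constructor
  · exact ((hx.const_mul A).mul hω.cos).hasDerivWithinAt.congr_deriv (by ring)
  · exact ((hω.cos.sub (hω.mul hω.sin)).const_mul A).hasDerivWithinAt.congr_deriv (by ring)

namespace SolvesOscillatorOn

variable {ω : ℝ} {f g : ℝ → ℝ} {s : Set ℝ} {v v' w w' : ℝ → ℝ}

theorem congr_forcing (h : SolvesOscillatorOn ω f s v v') (hfg : ∀ x ∈ s, f x = g x) :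
    SolvesOscillatorOn ω g s v v' := fun x hx =>
  ⟨(h x hx).1, (h x hx).2.congr_deriv (by rw [hfg x hx])⟩

theorem add (hv : SolvesOscillatorOn ω f s v v') (hw : SolvesOscillatorOn ω g s w w') :
    SolvesOscillatorOn ω (fun x => f x + g x) s (fun x => v x + w x) (fun x => v' x + w' x) :=
  fun x hx => ⟨(hv x hx).1.add (hw x hx).1, ((hv x hx).2.add (hw x hx).2).congr_deriv (by ring)⟩

theorem eqOn {a b : ℝ} (hω : ω ≠ 0) (hv : SolvesOscillatorOn ω f (Icc a b) v v')
    (hw : SolvesOscillatorOn ω f (Icc a b) w w') (h₀ : v a = w a) (h₀' : v' a = w' a) :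
    EqOn v w (Icc a b) := by
  set E := fun x => (v' x - w' x) ^ 2 + ω ^ 2 * (v x - w x) ^ 2
  have hE : ∀ x ∈ Icc a b, HasDerivWithinAt E 0 (Icc a b) x := fun x hx =>
    ((((hv x hx).2.sub (hw x hx).2).pow 2).add
      ((((hv x hx).1.sub (hw x hx).1).pow 2).const_mul (ω ^ 2))).congr_deriv
      (by simp only [Pi.sub_apply]; ring)
  have hconst := constant_of_has_deriv_right_zero (fun x hx => (hE x hx).continuousWithinAt)
    fun x hx => (hE x (Ico_subset_Icc_self hx)).mono_of_mem_nhdsWithin (Icc_mem_nhdsGE_of_mem hx)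
  intro x hx
  have hEx : E x = 0 := by simp [hconst x hx, E, h₀, h₀']
  have := ((add_eq_zero_iff_of_nonneg (sq_nonneg _) (by positivity)).mp hEx).2
  simpa [hω, sub_eq_zero] using this

variable {b : ℝ}

theorem eq_mul_sin (hω : ω ≠ 0) (hv : SolvesOscillatorOn ω 0 (Icc 0 b) v v') (h₀ : v 0 = 0) :
    ∀ x ∈ Icc 0 b, v x = v' 0 / ω * sin (ω * x) :=
  hv.eqOn hω ((solvesOscillatorOn_mul_sin ω (v' 0 / ω) ω _).congr_forcing fun x _ => by simp)
    (by simp [h₀]) (by field_simp; simp)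

theorem exists_eq_mul_sin_add_mul_sin {α c : ℝ} (hω : ω ≠ 0) (hαω : α ^ 2 ≠ ω ^ 2)
    (hv : SolvesOscillatorOn ω (fun x => c * sin (α * x)) (Icc 0 b) v v') (h₀ : v 0 = 0) :
    ∃ B, ∀ x ∈ Icc 0 b, v x = c / (ω ^ 2 - α ^ 2) * sin (α * x) + B * sin (ω * x) := by
  have hωα : ω ^ 2 - α ^ 2 ≠ 0 := sub_ne_zero.mpr hαω.symm
  set A := c / (ω ^ 2 - α ^ 2)
  refine ⟨(v' 0 - A * α) / ω, hv.eqOn hω (((solvesOscillatorOn_mul_sin ω A α _).add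
    (solvesOscillatorOn_mul_sin ω _ ω _)).congr_forcing fun x _ => ?_) (by simp [h₀]) ?_⟩
  · simp only [A]; field_simp; ring
  · field_simp; simp

theorem exists_eq_mul_sin_sub_mul_id_mul_cos {c : ℝ} (hω : ω ≠ 0)
    (hv : SolvesOscillatorOn ω (fun x => c * sin (ω * x)) (Icc 0 b) v v') (h₀ : v 0 = 0) :
    ∃ B, ∀ x ∈ Icc 0 b, v x = B * sin (ω * x) - c / (2 * ω) * x * cos (ω * x) := by
  set A := -(c / (2 * ω))
  set B := (v' 0 - A) / ω
  refine ⟨B, fun x hx => ?_⟩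
  have := hv.eqOn hω (((solvesOscillatorOn_mul_sin ω B ω _).add
    (solvesOscillatorOn_mul_id_mul_cos ω A _)).congr_forcing fun x _ => ?_) (by simp [h₀]) ?_ hx
  · rw [this]; ring
  · simp only [A]; field_simp; ring
  · simp [B]; field_simp; ring

end SolvesOscillatorOn

structure IsHingedSolution (h k : ℝ) (u : ℝ → ℝ) : Prop where
  contDiffOn : ContDiffOn ℝ 4 u (Icc 0 1)
  ode : ∀ x ∈ Icc (0 : ℝ) 1, iteratedDerivWithin 4 u (Icc 0 1) x
    - h * iteratedDerivWithin 2 u (Icc 0 1) x + k * u x = 0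
  left : u 0 = 0
  right : u 1 = 0
  left_deriv2 : iteratedDerivWithin 2 u (Icc 0 1) 0 = 0
  right_deriv2 : iteratedDerivWithin 2 u (Icc 0 1) 1 = 0

namespace IsHingedSolution

variable {h k : ℝ} {u : ℝ → ℝ}

theorem hasDerivWithinAt (hu : IsHingedSolution h k u) {i : ℕ} (hi : i < 4) {x : ℝ}
    (hx : x ∈ Icc (0 : ℝ) 1) :
    HasDerivWithinAt (iteratedDerivWithin i u (Icc 0 1))
      (iteratedDerivWithin (i + 1) u (Icc 0 1) x) (Icc 0 1) x :=
  hu.contDiffOn.hasDerivWithinAt_iteratedDerivWithin (uniqueDiffOn_Icc zero_lt_one) hi hx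

theorem le_neg_two_mul_sqrt (hu : IsHingedSolution h k u) (hk : 0 ≤ k)
    (hne : ∃ x ∈ Icc (0 : ℝ) 1, u x ≠ 0) : h ≤ -2 * √k := by
  by_contra! hlt
  set s := √k
  have hhs : 0 < h + 2 * s := by linarith
  have hs : s ^ 2 = k := sq_sqrt hk
  set D : ℕ → ℝ → ℝ := fun i => iteratedDerivWithin i u (Icc 0 1)
  have hD : ∀ i < 4, ∀ x ∈ Icc (0 : ℝ) 1, HasDerivWithinAt (D i) (D (i + 1) x) (Icc 0 1) x :=
    fun i hi x hx => hu.hasDerivWithinAt hi hx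
  have hcont : ∀ i < 4, ContinuousOn (D i) (Icc 0 1) :=
    fun i hi x hx => (hD i hi x hx).continuousWithinAt
  set E := fun x => (D 2 x + s * D 0 x) ^ 2 + (h + 2 * s) * D 1 x ^ 2
  have hE : ∀ x ∈ Icc (0 : ℝ) 1, HasDerivWithinAt
      (fun x => D 2 x * D 1 x - D 3 x * D 0 x + (h + 2 * s) * (D 1 x * D 0 x)) (E x)
      (Icc 0 1) x := by
    intro x hx
    have := hu.ode x hx
    simp only [E, D, iteratedDerivWithin_zero] at this ⊢
    refine ((((hD 2 (by norm_num) x hx).mul (hD 1 (by norm_num) x hx)).sub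
      ((hD 3 (by norm_num) x hx).mul (hD 0 (by norm_num) x hx))).add
      (((hD 1 (by norm_num) x hx).mul (hD 0 (by norm_num) x hx)).const_mul _)).congr_deriv ?_
    simp only [D, iteratedDerivWithin_zero]
    linear_combination (-(u x)) * this - u x ^ 2 * hs
  have hEcont : ContinuousOn E (Icc 0 1) := by
    have := hcont 0 (by norm_num); have := hcont 1 (by norm_num); have := hcont 2 (by norm_num)
    fun_prop
  have hint : ∫ x in (0 : ℝ)..1, E x = 0 := by
    rw [intervalIntegral.integral_eq_sub_of_hasDerivAt_of_le zero_le_one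
      (fun x hx => (hE x hx).continuousWithinAt)
      (fun x hx => (hE x (Ioo_subset_Icc_self hx)).hasDerivAt (Icc_mem_nhds hx.1 hx.2))
      (hEcont.intervalIntegrable_of_Icc zero_le_one)]
    simp [D, hu.left, hu.right, hu.left_deriv2, hu.right_deriv2]
  obtain ⟨x₁, hx₁, hD1⟩ : ∃ x ∈ Icc (0 : ℝ) 1, D 1 x ≠ 0 := by
    by_contra! hD1
    obtain ⟨x₀, hx₀, hux₀⟩ := hne
    refine hux₀ ?_
    rw [constant_of_derivWithin_zero (hu.contDiffOn.differentiableOn (by norm_num))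
      (fun x hx => by simpa [D] using hD1 x (Ico_subset_Icc_self hx)) x₀ hx₀, hu.left]
  have hpos : 0 < ∫ x in (0 : ℝ)..1, E x :=
    intervalIntegral.integral_pos zero_lt_one hEcont
      (fun x _ => add_nonneg (sq_nonneg _) (mul_nonneg hhs.le (sq_nonneg _)))
      ⟨x₁, hx₁, add_pos_of_nonneg_of_pos (sq_nonneg _) (mul_pos hhs (sq_pos_of_ne_zero hD1))⟩
  linarith

theorem exists_eq_mul_sin_add_mul_sin {ω₁ ω₂ : ℝ} (hω₁ : 0 < ω₁) (hω₂ : 0 < ω₂)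
    (hu : IsHingedSolution (-(ω₁ ^ 2 + ω₂ ^ 2)) (ω₁ ^ 2 * ω₂ ^ 2) u) :
    ∃ A B : ℝ, A * sin ω₁ = 0 ∧ B * sin ω₂ = 0 ∧
      ∀ x ∈ Icc (0 : ℝ) 1, u x = A * sin (ω₁ * x) + B * sin (ω₂ * x) := by
  set D : ℕ → ℝ → ℝ := fun i => iteratedDerivWithin i u (Icc 0 1)
  have hD : ∀ i < 4, ∀ x ∈ Icc (0 : ℝ) 1, HasDerivWithinAt (D i) (D (i + 1) x) (Icc 0 1) x :=
    fun i hi x hx => hu.hasDerivWithinAt hi hx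
  have hD0 : D 0 = u := iteratedDerivWithin_zero
  have hv : SolvesOscillatorOn ω₁ 0 (Icc 0 1) (fun x => D 2 x + ω₂ ^ 2 * D 0 x)
      (fun x => D 3 x + ω₂ ^ 2 * D 1 x) := fun x hx =>
    ⟨(hD 2 (by norm_num) x hx).add ((hD 0 (by norm_num) x hx).const_mul _),
      ((hD 3 (by norm_num) x hx).add ((hD 1 (by norm_num) x hx).const_mul _)).congr_deriv
        (by
          have := hu.ode x hx
          simp only [D, hD0, Pi.zero_apply] at this ⊢
          linear_combination this)⟩
  set c := (D 3 0 + ω₂ ^ 2 * D 1 0) / ω₁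
  have hvc := hv.eq_mul_sin hω₁.ne' (by simp [D, hu.left, hu.left_deriv2])
  have hc : c * sin ω₁ = 0 := by
    have := hvc 1 ⟨zero_le_one, le_rfl⟩
    simp only [D, iteratedDerivWithin_zero, hu.right, hu.right_deriv2, mul_one, mul_zero,
      add_zero] at this
    exact this.symm
  have hu' : SolvesOscillatorOn ω₂ (fun x => c * sin (ω₁ * x)) (Icc 0 1) u (D 1) := fun x hx =>
    ⟨hD0 ▸ hD 0 (by norm_num) x hx,
      (hD 1 (by norm_num) x hx).congr_deriv (by rw [← hD0]; linear_combination hvc x hx)⟩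
  rcases eq_or_ne ω₁ ω₂ with rfl | hne
  · obtain ⟨B, hB⟩ := hu'.exists_eq_mul_sin_sub_mul_id_mul_cos hω₁.ne' hu.left
    have h1 := hB 1 ⟨zero_le_one, le_rfl⟩
    rw [hu.right, mul_one, mul_one] at h1
    have h1' : 2 * ω₁ * B * sin ω₁ - c * cos ω₁ = 0 := by
      field_simp at h1; linear_combination -h1
    -- `c² = c² (sin² + cos²)`, where `c sin ω₁ = 0` and `c cos ω₁ = 2 ω₁ B sin ω₁`
    have hc0 : c = 0 := by
      have : c ^ 2 = 0 := by
        linear_combination (c * sin ω₁ + 2 * ω₁ * B * cos ω₁) * hc - c * cos ω₁ * h1'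
          - c ^ 2 * sin_sq_add_cos_sq ω₁
      exact pow_eq_zero_iff two_ne_zero |>.mp this
    refine ⟨B, 0, by simpa [hc0] using h1.symm, by simp, fun x hx => by rw [hB x hx, hc0]; ring⟩
  · have hsq : ω₁ ^ 2 ≠ ω₂ ^ 2 := fun h => hne ((sq_eq_sq₀ hω₁.le hω₂.le).mp h)
    obtain ⟨B, hB⟩ := hu'.exists_eq_mul_sin_add_mul_sin hω₂.ne' hsq hu.left
    refine ⟨c / (ω₂ ^ 2 - ω₁ ^ 2), B, by rw [div_mul_eq_mul_div, hc, zero_div], ?_, hB⟩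
    have h1 := (hB 1 ⟨zero_le_one, le_rfl⟩).symm
    rw [hu.right, div_mul_eq_mul_div] at h1
    simpa [hc] using h1

end IsHingedSolution

theorem natCast_mul_pi_injective : Function.Injective fun n : ℕ => (n : ℝ) * π :=
  fun _ _ h => by simpa [pi_ne_zero] using h

theorem exists_natCast_mul_pi_eq {ω : ℝ} (hω : 0 ≤ ω) (h : sin ω = 0) :
    ∃ n : ℕ, (n : ℝ) * π = ω := by
  obtain ⟨m, rfl⟩ := sin_eq_zero_iff.mp h
  lift m to ℕ using by exact_mod_cast nonneg_of_mul_nonneg_left hω pi_pos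
  exact ⟨m, by simp⟩

theorem finsum_mem_ite_mul_sin {S : Set ℕ} {ω A : ℝ} (hω : 0 ≤ ω) (hA : A * sin ω = 0)
    (hS : ∀ n : ℕ, (n : ℝ) * π = ω → n ∈ S) (x : ℝ) :
    ∑ᶠ n ∈ S, (if (n : ℝ) * π = ω then A else 0) * sin (n * π * x) = A * sin (ω * x) := by
  rcases eq_or_ne A 0 with rfl | hA0
  · simp
  obtain ⟨n₀, rfl⟩ := exists_natCast_mul_pi_eq hω ((mul_eq_zero.mp hA).resolve_left hA0)
  have hn₀ := hS n₀ rfl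
  simp_rw [natCast_mul_pi_injective.eq_iff]
  rw [finsum_eq_single _ n₀]
  · simp [hn₀]
  · intro n hn; simp [hn]

theorem mul_sin_add_mul_sin_eq_finsum {ω₁ ω₂ A B : ℝ} (hω₁ : 0 ≤ ω₁) (hω₂ : 0 ≤ ω₂)
    (hA : A * sin ω₁ = 0) (hB : B * sin ω₂ = 0) (x : ℝ) :
    A * sin (ω₁ * x) + B * sin (ω₂ * x) = ∑ᶠ n ∈ (fun n : ℕ => (n : ℝ) * π) ⁻¹' {ω₁, ω₂},
      ((if (n : ℝ) * π = ω₁ then A else 0) + (if (n : ℝ) * π = ω₂ then B else 0)) *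
        sin (n * π * x) := by
  simp_rw [add_mul]
  rw [finsum_mem_add_distrib ((toFinite _).preimage natCast_mul_pi_injective.injOn),
    finsum_mem_ite_mul_sin (S := _ ⁻¹' {ω₁, ω₂}) hω₁ hA (fun _ => Or.inl) x,
    finsum_mem_ite_mul_sin (S := _ ⁻¹' {ω₁, ω₂}) hω₂ hB (fun _ => Or.inr) x]

theorem exists_pos_eq_neg_sq_add_sq {h k : ℝ} (hk : 0 < k) (hh : h ≤ -2 * √k) :
    ∃ ω₁ ω₂ : ℝ, 0 < ω₁ ∧ 0 < ω₂ ∧ h = -(ω₁ ^ 2 + ω₂ ^ 2) ∧ k = ω₁ ^ 2 * ω₂ ^ 2 := by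
  have hs : 0 < √k := sqrt_pos.mpr hk
  -- `ω₂ ± ω₁ = √(-h ± 2√k)`
  set P := √(-h + 2 * √k)
  set Q := √(-h - 2 * √k)
  have hP : P ^ 2 = -h + 2 * √k := sq_sqrt (by linarith)
  have hQ : Q ^ 2 = -h - 2 * √k := sq_sqrt (by linarith)
  have hQP : Q < P := sqrt_lt_sqrt (by linarith) (by linarith)
  refine ⟨(P - Q) / 2, (P + Q) / 2, by linarith, by linarith [sqrt_nonneg (-h - 2 * √k)],
    by linear_combination (1 / 2) * (hP + hQ), ?_⟩
  linear_combination (-(P ^ 2 - Q ^ 2 + 4 * √k) / 16) * (hP - hQ) - sq_sqrt hk.le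

def hingedSpectrum (h k : ℝ) : Set ℕ :=
  {n : ℕ | 1 ≤ n ∧ (n : ℝ) ^ 4 * π ^ 4 + h * (n : ℝ) ^ 2 * π ^ 2 + k = 0}

theorem hingedSpectrum_eq_preimage {ω₁ ω₂ : ℝ} (hω₁ : 0 < ω₁) (hω₂ : 0 < ω₂) :
    hingedSpectrum (-(ω₁ ^ 2 + ω₂ ^ 2)) (ω₁ ^ 2 * ω₂ ^ 2) =
      (fun n : ℕ => (n : ℝ) * π) ⁻¹' {ω₁, ω₂} := by
  ext n
  have hnπ : 0 ≤ (n : ℝ) * π := by positivity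
  have hfac : (n : ℝ) ^ 4 * π ^ 4 + -(ω₁ ^ 2 + ω₂ ^ 2) * (n : ℝ) ^ 2 * π ^ 2 + ω₁ ^ 2 * ω₂ ^ 2 =
      (((n : ℝ) * π) ^ 2 - ω₁ ^ 2) * (((n : ℝ) * π) ^ 2 - ω₂ ^ 2) := by ring
  simp only [hingedSpectrum, mem_ofPred_eq, mem_preimage, mem_insert_iff, mem_singleton_iff, hfac,
    mul_eq_zero, sub_eq_zero, sq_eq_sq₀ hnπ hω₁.le, sq_eq_sq₀ hnπ hω₂.le]
  refine ⟨And.right, fun hn => ⟨Nat.one_le_iff_ne_zero.mpr ?_, hn⟩⟩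
  rintro rfl
  rcases hn with hn | hn <;> simp at hn <;> linarith

/-- A nontrivial `C⁴` solution of the linear problem
`u'''' - h u'' + k u = 0` on `[0,1]` with hinged boundary conditions forces
`h ≤ -2√k`; the set `S` of integers `n ≥ 1` with `n⁴π⁴ + h n²π² + k = 0` is
nonempty with at most two elements, and `u` is a combination of `sin(nπx)`,
`n ∈ S`. -/
theorem stmt4 (k h : ℝ) (hk : 0 < k) (u : ℝ → ℝ)
    (hreg : ContDiffOn ℝ 4 u (Icc (0:ℝ) 1))
    (hne : ∃ x ∈ Icc (0:ℝ) 1, u x ≠ 0)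
    (heq : ∀ x ∈ Icc (0:ℝ) 1,
      iteratedDerivWithin 4 u (Icc (0:ℝ) 1) x
        - h * iteratedDerivWithin 2 u (Icc (0:ℝ) 1) x + k * u x = 0)
    (hbc0 : u 0 = 0) (hbc1 : u 1 = 0)
    (hbc2 : iteratedDerivWithin 2 u (Icc (0:ℝ) 1) 0 = 0)
    (hbc3 : iteratedDerivWithin 2 u (Icc (0:ℝ) 1) 1 = 0) :
    h ≤ -2 * Real.sqrt k ∧
    {n : ℕ | 1 ≤ n ∧ (n : ℝ)^4*π^4 + h*(n : ℝ)^2*π^2 + k = 0}.Nonempty ∧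
    {n : ℕ | 1 ≤ n ∧ (n : ℝ)^4*π^4 + h*(n : ℝ)^2*π^2 + k = 0}.Finite ∧
    {n : ℕ | 1 ≤ n ∧ (n : ℝ)^4*π^4 + h*(n : ℝ)^2*π^2 + k = 0}.ncard ≤ 2 ∧
    ∃ a : ℕ → ℝ, ∀ x ∈ Icc (0:ℝ) 1,
      u x = ∑ᶠ n ∈ {n : ℕ | 1 ≤ n ∧ (n : ℝ)^4*π^4 + h*(n : ℝ)^2*π^2 + k = 0},
        a n * Real.sin ((n : ℝ)*π*x) := by
  have hu : IsHingedSolution h k u := ⟨hreg, heq, hbc0, hbc1, hbc2, hbc3⟩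
  have hh := hu.le_neg_two_mul_sqrt hk.le hne
  obtain ⟨ω₁, ω₂, hω₁, hω₂, rfl, rfl⟩ := exists_pos_eq_neg_sq_add_sq hk hh
  obtain ⟨A, B, hA, hB, huAB⟩ := hu.exists_eq_mul_sin_add_mul_sin hω₁ hω₂
  rw [← hingedSpectrum, hingedSpectrum_eq_preimage hω₁ hω₂]
  set S := (fun n : ℕ => (n : ℝ) * π) ⁻¹' {ω₁, ω₂}
  obtain ⟨a, ha⟩ : ∃ a : ℕ → ℝ, ∀ x ∈ Icc (0 : ℝ) 1, u x = ∑ᶠ n ∈ S, a n * sin (n * π * x) :=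
    ⟨_, fun x hx => (huAB x hx).trans (mul_sin_add_mul_sin_eq_finsum hω₁.le hω₂.le hA hB x)⟩
  have hcard : S.ncard ≤ 2 := calc
    S.ncard ≤ ({ω₁, ω₂} : Set ℝ).ncard :=
      ncard_le_ncard_of_injOn _ (fun _ hn => hn) natCast_mul_pi_injective.injOn
    _ ≤ 2 := (ncard_insert_le _ _).trans (by simp)
  refine ⟨hh, nonempty_iff_ne_empty.mpr fun hS => ?_,
    (toFinite _).preimage natCast_mul_pi_injective.injOn, hcard, a, ha⟩
  obtain ⟨x, hx, hux⟩ := hne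
  exact hux (by simpa [hS] using ha x hx)
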